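/- The gonality of the Ferrers rook graph of the Ferrers diagram with row lengths (4,2,2) equals 4. -/

import Mathlib

open Finset

open scoped Classical

/-- A divisor is effective if it is nonnegative everywhere. -/
def Effective {V : Type*} (D : V → ℤ) : Prop := ∀ v, 0 ≤ D v

/-- The degree of a divisor: the total number of chips. -/
def degD {V : Type*} [Fintype V] (D : V → ℤ) : ℤ := ∑ v, D v

/-- The effect on a vertex `w` of firing each vertex `u` with multiplicity `f u`. -/
noncomputable def lap {V : Type*} [Fintype V] (G : SimpleGraph V) (f : V → ℤ) (w : V) : ℤ :=
  (∑ u, f u * (if G.Adj u w then 1 else 0)) - f w * (∑ u, if G.Adj u w then (1 : ℤ) else 0)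

/-- Two divisors are (chip-firing) equivalent if one is obtained from the other by a
sequence of chip-firing moves, i.e. they differ by a Laplacian of some `f : V → ℤ`. -/
def LinEquiv {V : Type*} [Fintype V] (G : SimpleGraph V) (D D' : V → ℤ) : Prop :=
  ∃ f : V → ℤ, ∀ w, D' w = D w + lap G f w

/-- A divisor has positive rank if for every vertex there is an equivalent effective
divisor with a chip at that vertex. -/
def PositiveRank {V : Type*} [Fintype V] (G : SimpleGraph V) (D : V → ℤ) : Prop :=
  ∀ v, ∃ D', LinEquiv G D D' ∧ Effective D' ∧ 0 < D' v

/-- A Ferrers diagram: a finite subset of ℕ² with coordinates ≥ 1, closed under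
decreasing either coordinate toward 1. -/
def IsFerrers (F : Finset (ℕ × ℕ)) : Prop :=
  ∀ p ∈ F, 1 ≤ p.1 ∧ 1 ≤ p.2 ∧ (p.1 = 1 ∨ (p.1 - 1, p.2) ∈ F) ∧ (p.2 = 1 ∨ (p.1, p.2 - 1) ∈ F)

/-- The Ferrers rook graph: vertices are points of `F`, two distinct points adjacent
iff they share a row or a column. -/
def rookGraph (F : Finset (ℕ × ℕ)) : SimpleGraph {p // p ∈ F} where
  Adj a b := a ≠ b ∧ ((a : ℕ × ℕ).1 = (b : ℕ × ℕ).1 ∨ (a : ℕ × ℕ).2 = (b : ℕ × ℕ).2)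
  symm := ⟨fun a b h => ⟨h.1.symm, h.2.imp Eq.symm Eq.symm⟩⟩
  loopless := ⟨fun a h => h.1 rfl⟩

/-- The set of degrees of positive-rank divisors on `R(F)`; its least element is the gonality. -/
def gonSet (F : Finset (ℕ × ℕ)) : Set ℤ :=
  {d | ∃ D : {p // p ∈ F} → ℤ, PositiveRank (rookGraph F) D ∧ degD D = d}

/-- The divisor `D_{x,y}`: one chip on each vertex not in column `x` and not in row `y`. -/
def Dxy (F : Finset (ℕ × ℕ)) (x y : ℕ) : {p // p ∈ F} → ℤ :=
  fun p => if (p : ℕ × ℕ).1 ≠ x ∧ (p : ℕ × ℕ).2 ≠ y then 1 else 0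

def F4 : Finset (ℕ × ℕ) := {(1, 1), (2, 1), (3, 1), (4, 1), (1, 2), (2, 2), (1, 3), (2, 3)}

/-! The four chips on rows 2–3 (the divisor `Dxy F4 3 1`) have positive rank, so the gonality is
at most 4.

For the lower bound, firing the set where a firing script is maximal shows (Dhar) that if a fire
started at `q` burns the whole graph with `E` chips as firewalls, then no effective divisor
equivalent to `E` has more chips at `q` than `E`. Since adding chips preserves positive rank, it
suffices to rule out degree 3, and every effective divisor of degree 3 is, possibly after firing
the vertex carrying all three chips, of that kind for some chip-free `q`; this is checked by
computation on a copy of the rook graph indexed by `Fin 8`. -/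
section ChipFiring

variable {V : Type*} [Fintype V] {G : SimpleGraph V}

lemma lap_eq_sum [DecidableRel G.Adj] (f : V → ℤ) (w : V) :
    lap G f w = ∑ u with G.Adj u w, (f u - f w) := by
  simp only [lap, sum_filter, mul_sum, ← sum_sub_distrib]
  refine sum_congr rfl fun u _ => ?_
  split_ifs <;> ring

lemma sum_lap (f : V → ℤ) : ∑ w, lap G f w = 0 := by
  classical
  have hswap : ∑ w, lap G f w = -∑ w, lap G f w := by
    simp only [lap_eq_sum, sum_filter, ← sum_neg_distrib]
    rw [sum_comm]
    refine sum_congr rfl fun u _ => sum_congr rfl fun w _ => ?_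
    simp only [G.adj_comm u w]
    split_ifs <;> ring
  omega

lemma lap_add (f g : V → ℤ) (w : V) : lap G (f + g) w = lap G f w + lap G g w := by
  simp only [lap, Pi.add_apply, add_mul, sum_add_distrib]
  ring

lemma lap_neg (f : V → ℤ) (w : V) : lap G (-f) w = -lap G f w := by
  simp only [lap, Pi.neg_apply, neg_mul, sum_neg_distrib]
  ring

namespace LinEquiv

variable {D D' D'' : V → ℤ}

lemma symm (h : LinEquiv G D D') : LinEquiv G D' D := by
  obtain ⟨f, hf⟩ := h
  exact ⟨-f, fun w => by rw [hf w, lap_neg]; ring⟩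

lemma trans (h : LinEquiv G D D') (h' : LinEquiv G D' D'') : LinEquiv G D D'' := by
  obtain ⟨f, hf⟩ := h
  obtain ⟨g, hg⟩ := h'
  exact ⟨f + g, fun w => by rw [hg w, hf w, lap_add]; ring⟩

lemma degD_eq (h : LinEquiv G D D') : degD D' = degD D := by
  obtain ⟨f, hf⟩ := h
  simp only [degD, hf, sum_add_distrib, sum_lap, add_zero]

end LinEquiv

lemma PositiveRank.add_effective {D A : V → ℤ} (hD : PositiveRank G D) (hA : Effective A) :
    PositiveRank G (D + A) := by
  intro v
  obtain ⟨D', ⟨f, hf⟩, hD', hv⟩ := hD v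
  refine ⟨D' + A, ⟨f, fun w => ?_⟩, fun w => ?_, ?_⟩
  · simp only [Pi.add_apply, hf w]
    ring
  · exact add_nonneg (hD' w) (hA w)
  · exact add_pos_of_pos_of_nonneg hv (hA v)

lemma degD_comp_equiv {W : Type*} [Fintype W] (e : V ≃ W) (D : W → ℤ) :
    degD (D ∘ e) = degD D :=
  Equiv.sum_comp e D

section Iso

variable {W : Type*} [Fintype W] {H : SimpleGraph W} (φ : G ≃g H)

lemma lap_comp_iso (f : W → ℤ) (v : V) : lap G (f ∘ φ) v = lap H f (φ v) := by
  classical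
  rw [lap_eq_sum, lap_eq_sum, sum_filter, sum_filter, ← Equiv.sum_comp φ.toEquiv]
  exact sum_congr rfl fun u _ => by
    simp only [Function.comp_apply, RelIso.coe_fn_toEquiv, φ.map_adj_iff]

lemma PositiveRank.comp_iso {D : W → ℤ} (hD : PositiveRank H D) : PositiveRank G (D ∘ φ) := by
  intro v
  obtain ⟨D', ⟨f, hf⟩, hD', hv⟩ := hD (φ v)
  exact ⟨D' ∘ φ, ⟨f ∘ φ, fun w => by simp [lap_comp_iso, hf]⟩, fun w => hD' (φ w), hv⟩

end Iso

lemma Effective.eq_zero_of_degD_eq_zero {E : V → ℤ} (hE : Effective E) (hdeg : degD E = 0) :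
    E = 0 := by
  funext v
  exact (sum_eq_zero_iff_of_nonneg fun u _ => hE u).1 hdeg v (mem_univ v)

section Effective

variable [DecidableEq V] {E : V → ℤ}

lemma Effective.exists_eq_single_add (hE : Effective E) (hdeg : 0 < degD E) :
    ∃ a E', Effective E' ∧ degD E' = degD E - 1 ∧ E = Pi.single a 1 + E' := by
  obtain ⟨a, ha⟩ : ∃ a, 0 < E a := by
    by_contra! h
    exact hdeg.not_ge (sum_nonpos fun v _ => h v)
  refine ⟨a, E - Pi.single a 1, fun v => ?_, ?_, (add_sub_cancel _ _).symm⟩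
  · rcases eq_or_ne v a with rfl | hv
    · simp only [Pi.sub_apply, Pi.single_eq_same]
      omega
    · simp [hv, hE v]
  · simp [degD, sum_sub_distrib]

lemma Effective.exists_eq_three_singles (hE : Effective E) (hdeg : degD E = 3) :
    ∃ a b c, E = Pi.single a 1 + Pi.single b 1 + Pi.single c 1 := by
  obtain ⟨a, E₁, hE₁, h₁, rfl⟩ := hE.exists_eq_single_add (by omega)
  obtain ⟨b, E₂, hE₂, h₂, rfl⟩ := hE₁.exists_eq_single_add (by omega)
  obtain ⟨c, E₃, hE₃, h₃, rfl⟩ := hE₂.exists_eq_single_add (by omega)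
  rw [hE₃.eq_zero_of_degD_eq_zero (by omega)]
  exact ⟨a, b, c, by abel⟩

end Effective

end ChipFiring

section Burning

variable {V : Type*} [Fintype V] [DecidableEq V] (G : SimpleGraph V) [DecidableRel G.Adj]

def burnStep (E : V → ℤ) (B : Finset V) : Finset V :=
  B ∪ ({v | E v < #{u ∈ B | G.Adj u v}} : Finset V)

/-- Dhar's burning algorithm: a fire started at `q` spreads to `v` once more burning neighbours
reach `v` than `v` holds chips. -/
def burnt (E : V → ℤ) (q : V) (n : ℕ) : Finset V := (burnStep G E)^[n] {q}

variable {G} {E D' : V → ℤ} {q : V} {S : Finset V}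

lemma disjoint_burnt (hq : q ∉ S) (hS : ∀ v ∈ S, #{u ∈ Sᶜ | G.Adj u v} ≤ E v) (n : ℕ) :
    Disjoint (burnt G E q n) S := by
  induction n with
  | zero => simpa [burnt] using hq
  | succ n ih =>
    rw [burnt, Function.iterate_succ_apply', ← burnt, burnStep, disjoint_union_left]
    refine ⟨ih, disjoint_left.2 fun v hv hvS => ?_⟩
    have hsub : {u ∈ burnt G E q n | G.Adj u v} ⊆ {u ∈ Sᶜ | G.Adj u v} :=
      filter_subset_filter _ (subset_compl_iff_disjoint_right.2 ih)
    have := (mem_filter.1 hv).2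
    have := card_le_card hsub
    have := hS v hvS
    omega

lemma LinEquiv.exists_stable_set (h : LinEquiv G E D') (hD' : Effective D') (hq : E q < D' q) :
    ∃ S : Finset V, S.Nonempty ∧ q ∉ S ∧ ∀ v ∈ S, #{u ∈ Sᶜ | G.Adj u v} ≤ E v := by
  obtain ⟨f, hf⟩ := h
  obtain ⟨m, -, hm⟩ := exists_max_image univ f ⟨q, mem_univ q⟩
  set S : Finset V := {v | f v = f m}
  have key : ∀ v ∈ S, lap G f v ≤ -#{u ∈ Sᶜ | G.Adj u v} := by
    intro v hv
    calc lap G f v = ∑ u with G.Adj u v, (f u - f v) := lap_eq_sum f v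
      _ ≤ ∑ u with G.Adj u v, if u ∈ S then 0 else -1 := sum_le_sum fun u _ => by
          have := hm u (mem_univ u)
          simp only [S, mem_filter, mem_univ, true_and] at hv ⊢
          split_ifs <;> omega
      _ = -#{u ∈ Sᶜ | G.Adj u v} := by
          simp only [sum_ite, sum_const_zero, sum_const, smul_neg, nsmul_eq_mul, mul_one,
            zero_add, filter_filter, neg_inj, Nat.cast_inj]
          congr 1
          ext u
          simp [and_comm]
  refine ⟨S, ⟨m, by simp [S]⟩, fun hqS => ?_, fun v hv => ?_⟩
  · have := key q hqS
    have := hf q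
    omega
  · have := key v hv
    have := hf v
    have := hD' v
    omega

theorem LinEquiv.le_of_burnt_eq_univ {n : ℕ} (h : LinEquiv G E D') (hD' : Effective D')
    (hburn : burnt G E q n = univ) : D' q ≤ E q := by
  by_contra! hq
  obtain ⟨S, ⟨v, hv⟩, hqS, hS⟩ := h.exists_stable_set hD' hq
  have := disjoint_burnt hqS hS n
  rw [hburn] at this
  exact disjoint_left.1 this (mem_univ v) hv

end Burning

def cell (i : Fin 8) : {p // p ∈ F4} :=
  ⟨![(1, 1), (2, 1), (3, 1), (4, 1), (1, 2), (2, 2), (1, 3), (2, 3)] i, by revert i; decide⟩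

noncomputable def cellEquiv : Fin 8 ≃ {p // p ∈ F4} := Equiv.ofBijective cell ⟨by decide, by decide⟩

def rook8 : SimpleGraph (Fin 8) := (rookGraph F4).comap cell

instance : DecidableRel rook8.Adj := fun i j =>
  inferInstanceAs (Decidable (cell i ≠ cell j ∧
    ((cell i : ℕ × ℕ).1 = (cell j : ℕ × ℕ).1 ∨ (cell i : ℕ × ℕ).2 = (cell j : ℕ × ℕ).2)))

noncomputable def rookIso : rook8 ≃g rookGraph F4 := SimpleGraph.Iso.comap cellEquiv _

lemma rook8_positiveRank_Dxy : PositiveRank rook8 (Dxy F4 3 1 ∘ cell) := by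
  -- Firing rows 2–3 moves their four chips onto (1, 1) and (2, 1), two each; firing rows 2–3
  -- again together with these two cells moves them on to (3, 1) and (4, 1).
  suffices ∀ v, ∃ f ∈ [0, ![0, 0, 0, 0, 1, 1, 1, 1], ![1, 1, 0, 0, 2, 2, 2, 2]],
      (∀ w, 0 ≤ Dxy F4 3 1 (cell w) + lap rook8 f w) ∧ 0 < Dxy F4 3 1 (cell v) + lap rook8 f v by
    intro v
    obtain ⟨f, -, hf⟩ := this v
    exact ⟨_, ⟨f, fun _ => rfl⟩, hf⟩
  simp only [lap_eq_sum]
  decide +kernel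

-- Firing `a` is needed only for three chips stacked on a vertex of degree 3; firing it spreads
-- them over its neighbours.
lemma rook8_exists_burnt_eq_univ : ∀ a b c : Fin 8, ∃ f ∈ [0, Pi.single a 1], ∃ q,
    let E := Pi.single a 1 + Pi.single b 1 + Pi.single c 1 + fun w => lap rook8 f w
    E q = 0 ∧ burnt rook8 E q 4 = univ := by
  simp only [lap_eq_sum]
  decide +kernel

lemma rook8_not_positiveRank_of_degD_eq_three {D : Fin 8 → ℤ} (hdeg : degD D = 3) :
    ¬ PositiveRank rook8 D := by
  intro hD
  obtain ⟨E, hDE, hE, -⟩ := hD 0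
  obtain ⟨a, b, c, rfl⟩ := hE.exists_eq_three_singles (hDE.degD_eq.trans hdeg)
  obtain ⟨f, -, q, hq, hburn⟩ := rook8_exists_burnt_eq_univ a b c
  obtain ⟨D', hDD', hD', hpos⟩ := hD q
  have hfire : LinEquiv rook8 D
      (Pi.single a 1 + Pi.single b 1 + Pi.single c 1 + fun w => lap rook8 f w) :=
    hDE.trans ⟨f, fun _ => rfl⟩
  have := (hfire.symm.trans hDD').le_of_burnt_eq_univ hD' hburn
  omega

lemma rook8_four_le_degD {D : Fin 8 → ℤ} (hD : PositiveRank rook8 D) : 4 ≤ degD D := by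
  by_contra! hlt
  have hpad : Effective (Pi.single 0 (3 - degD D) : Fin 8 → ℤ) := by
    intro v
    rcases eq_or_ne v 0 with rfl | hv
    · simp only [Pi.single_eq_same]
      omega
    · simp [hv]
  refine rook8_not_positiveRank_of_degD_eq_three ?_ (hD.add_effective hpad)
  simp [degD, sum_add_distrib]

theorem stmt18 : IsLeast (gonSet F4) 4 := by
  refine ⟨⟨Dxy F4 3 1, ?_, ?_⟩, ?_⟩
  · convert rook8_positiveRank_Dxy.comp_iso rookIso.symm using 1
    funext v
    exact congrArg _ (cellEquiv.apply_symm_apply v).symm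
  · rw [← degD_comp_equiv cellEquiv]
    decide
  · rintro d ⟨D, hD, rfl⟩
    rw [← degD_comp_equiv cellEquiv]
    exact rook8_four_le_degD (hD.comp_iso rookIso)
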